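/- Let n ≥ r > 1. There is no constant C > 0 such that d(x,y) ≤ C ‖x x* − y y*‖₂ for all x, y ∈ ℂ^{n×r}, where d(x,y) = min_{U∈U(r)} ‖x − y U‖₂·‖x + y U‖₂ and ‖·‖₂ is the Frobenius norm. -/

import Mathlib

open Matrix Filter
open scoped ComplexOrder

/-- `Matrix.PosSemidef.sqrt` as it stood in Mathlib (Dec 2024); removed since. -/
noncomputable def Matrix.PosSemidef.sqrt {n 𝕜 : Type*} [Fintype n] [DecidableEq n] [RCLike 𝕜]
    {A : Matrix n n 𝕜} (hA : A.PosSemidef) : Matrix n n 𝕜 :=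
  hA.1.eigenvectorUnitary.1 * diagonal ((↑) ∘ (Real.sqrt ∘ hA.1.eigenvalues)) *
    (star hA.1.eigenvectorUnitary : Matrix n n 𝕜)

noncomputable def frob {p q : ℕ} (x : Matrix (Fin p) (Fin q) ℂ) : ℝ :=
  Real.sqrt (Matrix.trace (xᴴ * x)).re

noncomputable def rinner {p q : ℕ} (X Y : Matrix (Fin p) (Fin q) ℂ) : ℝ :=
  (Matrix.trace (Xᴴ * Y)).re

noncomputable def nuclear {p q : ℕ} (x : Matrix (Fin p) (Fin q) ℂ) : ℝ :=
  (Matrix.trace (Matrix.posSemidef_conjTranspose_mul_self x).sqrt).re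

noncomputable def theta {n r : ℕ} (x : Matrix (Fin n) (Fin r) ℂ) : Matrix (Fin n) (Fin n) ℂ :=
  (Matrix.posSemidef_self_mul_conjTranspose x).sqrt

noncomputable def psi {n r : ℕ} (x : Matrix (Fin n) (Fin r) ℂ) : Matrix (Fin n) (Fin n) ℂ :=
  frob x • theta x

noncomputable def Dmet {n r : ℕ} (x y : Matrix (Fin n) (Fin r) ℂ) : ℝ :=
  ⨅ U : Matrix.unitaryGroup (Fin r) ℂ, frob (x - y * (U : Matrix (Fin r) (Fin r) ℂ))

noncomputable def dmet {n r : ℕ} (x y : Matrix (Fin n) (Fin r) ℂ) : ℝ :=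
  ⨅ U : Matrix.unitaryGroup (Fin r) ℂ,
    frob (x - y * (U : Matrix (Fin r) (Fin r) ℂ)) * frob (x + y * (U : Matrix (Fin r) (Fin r) ℂ))

/-
Take matrix units `E₀₀, E₁₁` in distinct rows and columns (possible as `n ≥ r ≥ 2`), and the pair
`x = E₀₀ + b E₁₁`, `y = E₀₀`. Then `x x* − y y* = |b|² E₁₁`, so the right-hand side is `C |b|²`.
For every `U`, the `(1,1)` entries of `x ∓ y U` both equal `b`, while their `(0,0)` entries
`1 ∓ U₀₀` cannot both have modulus below `1`. Hence both factors `‖x ∓ yU‖₂` are at least `|b|`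
and one of them is at least `1`, so `d(x,y) ≥ |b|`, which beats `C |b|²` as `b → 0`.
-/

section Frobenius

variable {p q : ℕ}

lemma frob_eq_sqrt_sum (M : Matrix (Fin p) (Fin q) ℂ) :
    frob M = √(∑ j, ∑ i, Complex.normSq (M i j)) := by
  unfold frob
  congr 1
  simp [Matrix.trace, Matrix.diag, Matrix.mul_apply, Complex.re_sum,
    ← Complex.normSq_eq_conj_mul_self]

lemma norm_apply_le_frob (M : Matrix (Fin p) (Fin q) ℂ) (i : Fin p) (j : Fin q) :
    ‖M i j‖ ≤ frob M := by
  have hle : Complex.normSq (M i j) ≤ ∑ j', ∑ i', Complex.normSq (M i' j') :=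
    calc Complex.normSq (M i j) ≤ ∑ i', Complex.normSq (M i' j) :=
          Finset.single_le_sum (f := fun i' => Complex.normSq (M i' j))
            (fun _ _ => Complex.normSq_nonneg _) (Finset.mem_univ i)
      _ ≤ _ := Finset.single_le_sum (f := fun j' => ∑ i', Complex.normSq (M i' j'))
          (fun _ _ => Finset.sum_nonneg fun _ _ => Complex.normSq_nonneg _) (Finset.mem_univ j)
  rw [frob_eq_sqrt_sum, Complex.norm_def]
  exact Real.sqrt_le_sqrt hle

lemma frob_single (i : Fin p) (j : Fin q) (c : ℂ) : frob (single i j c) = ‖c‖ := by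
  have hsum : ∑ j', ∑ i', Complex.normSq (single i j c i' j') = Complex.normSq c := by
    simp [single, ite_and, apply_ite Complex.normSq, Finset.sum_ite_eq]
  rw [frob_eq_sqrt_sum, hsum, Complex.norm_def]

end Frobenius

lemma norm_le_max_norm_sub_norm_add {E : Type*} [SeminormedAddCommGroup E] [NormedSpace ℝ E]
    (a u : E) : ‖a‖ ≤ max ‖a - u‖ ‖a + u‖ := by
  have h2a : 2 * ‖a‖ ≤ ‖a - u‖ + ‖a + u‖ :=
    calc 2 * ‖a‖ = ‖(a - u) + (a + u)‖ := by
          rw [sub_add_add_cancel, ← two_smul ℝ a, norm_smul, Real.norm_two]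
      _ ≤ ‖a - u‖ + ‖a + u‖ := norm_add_le _ _
  linarith [le_max_left ‖a - u‖ ‖a + u‖, le_max_right ‖a - u‖ ‖a + u‖]

section MatrixUnits

variable {n r : ℕ} {i₀ i₁ : Fin n} {j₀ j₁ : Fin r}

lemma mul_conjTranspose_sub_mul_conjTranspose_single (hj : j₀ ≠ j₁) (a b : ℂ) :
    (single i₀ j₀ a + single i₁ j₁ b) * (single i₀ j₀ a + single i₁ j₁ b)ᴴ -
      single i₀ j₀ a * (single i₀ j₀ a)ᴴ = single i₁ i₁ (b * star b) := by
  simp [Matrix.add_mul, Matrix.mul_add, hj, hj.symm]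

lemma norm_le_frob_mul_frob_single (hi : i₀ ≠ i₁) (hj : j₀ ≠ j₁) (b : ℂ)
    (V : Matrix (Fin r) (Fin r) ℂ) :
    ‖b‖ ≤ frob (single i₀ j₀ 1 + single i₁ j₁ b - single i₀ j₀ (1 : ℂ) * V) *
      frob (single i₀ j₀ 1 + single i₁ j₁ b + single i₀ j₀ (1 : ℂ) * V) := by
  set s := frob (single i₀ j₀ 1 + single i₁ j₁ b - single i₀ j₀ (1 : ℂ) * V)
  set t := frob (single i₀ j₀ 1 + single i₁ j₁ b + single i₀ j₀ (1 : ℂ) * V)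
  have hs₁ : ‖b‖ ≤ s := le_of_eq_of_le (by simp [hi, hi.symm, hj]) (norm_apply_le_frob _ i₁ j₁)
  have ht₁ : ‖b‖ ≤ t := le_of_eq_of_le (by simp [hi, hi.symm, hj]) (norm_apply_le_frob _ i₁ j₁)
  have hs₀ : ‖1 - V j₀ j₀‖ ≤ s := le_of_eq_of_le (by simp [hi.symm]) (norm_apply_le_frob _ i₀ j₀)
  have ht₀ : ‖1 + V j₀ j₀‖ ≤ t := le_of_eq_of_le (by simp [hi.symm]) (norm_apply_le_frob _ i₀ j₀)
  have hmax : 1 ≤ max s t := by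
    simpa using (norm_le_max_norm_sub_norm_add (1 : ℂ) (V j₀ j₀)).trans (max_le_max hs₀ ht₀)
  calc ‖b‖ = ‖b‖ * 1 := (mul_one _).symm
    _ ≤ min s t * max s t :=
        mul_le_mul (le_min hs₁ ht₁) hmax zero_le_one ((norm_nonneg b).trans (le_min hs₁ ht₁))
    _ = s * t := min_mul_max s t

lemma norm_le_dmet_single (hi : i₀ ≠ i₁) (hj : j₀ ≠ j₁) (b : ℂ) :
    ‖b‖ ≤ dmet (single i₀ j₀ 1 + single i₁ j₁ b) (single i₀ j₀ 1) :=
  le_ciInf fun U => norm_le_frob_mul_frob_single hi hj b U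

end MatrixUnits

/-- for `n ≥ r > 1` there is no constant `C > 0` such that
`d(x,y) ≤ C ‖x x* − y y*‖₂` for all `x, y ∈ ℂ^{n×r}`. -/
theorem no_global_dmet_frobenius_bound (n r : ℕ) (hr : 1 < r) (hnr : r ≤ n) :
    ¬ ∃ C : ℝ, 0 < C ∧ ∀ x y : Matrix (Fin n) (Fin r) ℂ,
      dmet x y ≤ C * frob (x * xᴴ - y * yᴴ) := by
  rintro ⟨C, hC, hbound⟩
  have hn : 1 < n := hr.trans_le hnr
  set ε : ℝ := (2 * C)⁻¹
  have hε : 0 < ε := by positivity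
  have h := (norm_le_dmet_single (i₀ := ⟨0, by omega⟩) (i₁ := ⟨1, hn⟩) (j₀ := ⟨0, by omega⟩)
    (j₁ := ⟨1, hr⟩) (by simp [Fin.ext_iff]) (by simp [Fin.ext_iff]) (ε : ℂ)).trans (hbound _ _)
  rw [mul_conjTranspose_sub_mul_conjTranspose_single (by simp [Fin.ext_iff]), frob_single] at h
  have hCε : C * ε = 1 / 2 := by simp only [ε]; field_simp
  simp only [norm_mul, norm_star, Complex.norm_real, Real.norm_eq_abs, abs_of_pos hε] at h
  have hhalf : ε ≤ ε / 2 := h.trans_eq (by rw [← mul_assoc, hCε]; ring)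
  linarith
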